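/- Consider the six four-qubit sequence states |ψ_{ij}⟩ = |ψ_i⟩⊗|ψ_j⟩ (i ≠ j) built from S_U = {|ψ₁⟩=|00⟩, |ψ₂⟩=|0+⟩, |ψ₃⟩=|+0⟩}. The three subsets S₁ = {ψ₁₂, ψ₁₃, ψ₂₁}, S₂ = {ψ₁₂, ψ₂₃, ψ₃₁}, S₃ = {ψ₁₃, ψ₂₁, ψ₃₂} each consist of three pure states satisfying the Caves–Fuchs–Schack antidistinguishability conditions, and S₁ ∪ S₂ ∪ S₃ equals the full set of six sequence states; hence (by the union theorem) the set of six sequence states is globally antidistinguishable. -/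

import Mathlib

open Matrix Complex
open scoped ComplexOrder

noncomputable section

/-- Outer product `|v⟩⟨v|`. -/
def outer {n : Type*} [Fintype n] (v : n → ℂ) : Matrix n n ℂ := vecMulVec v (star v)

/-- Expectation value `⟨v|M|v⟩`. -/
def expVal {n : Type*} [Fintype n] (M : Matrix n n ℂ) (v : n → ℂ) : ℂ := star v ⬝ᵥ (M *ᵥ v)

/-- Inner product `⟨v|w⟩`. -/
def ip {n : Type*} [Fintype n] (v w : n → ℂ) : ℂ := ∑ i, star (v i) * w i

def PureAntidist {n : ℕ} {ι : Type*} [Fintype ι] [DecidableEq ι] (φ : Fin n → (ι → ℂ)) : Prop :=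
  ∃ P : Fin n → Matrix ι ι ℂ,
    (∀ j, (P j).PosSemidef) ∧
    (∑ j, P j) = 1 ∧
    (∀ j, expVal (P j) (φ j) = 0) ∧
    (∀ j, 0 < (∑ i, expVal (P j) (φ i)).re)

/-- The Caves–Fuchs–Schack antidistinguishability conditions for three pure states. -/
def CFS {ι : Type*} [Fintype ι] (a b c : ι → ℂ) : Prop :=
  Complex.normSq (ip a b) + Complex.normSq (ip a c) + Complex.normSq (ip b c) < 1 ∧
  (1 - (Complex.normSq (ip a b) + Complex.normSq (ip a c) + Complex.normSq (ip b c))) ^ 2 ≥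
    4 * Complex.normSq (ip a b) * Complex.normSq (ip a c) * Complex.normSq (ip b c)

def tp (v w : Fin 2 → ℂ) : Fin 2 × Fin 2 → ℂ := fun p => v p.1 * w p.2

def tp4 (v w : Fin 2 × Fin 2 → ℂ) : (Fin 2 × Fin 2) × (Fin 2 × Fin 2) → ℂ :=
  fun p => v p.1 * w p.2

def q0 : Fin 2 → ℂ := ![1, 0]
def qp : Fin 2 → ℂ := ![(1 / Real.sqrt 2 : ℝ), (1 / Real.sqrt 2 : ℝ)]

/-- The parent states `|ψ₁⟩ = |00⟩, |ψ₂⟩ = |0+⟩, |ψ₃⟩ = |+0⟩`. -/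
def par : Fin 3 → (Fin 2 × Fin 2 → ℂ) := ![tp q0 q0, tp q0 qp, tp qp q0]

/-- The six sequence states `|ψ_{ij}⟩ = |ψ_i⟩⊗|ψ_j⟩`, `i ≠ j`, in the order
`ψ₁₂, ψ₁₃, ψ₂₁, ψ₂₃, ψ₃₁, ψ₃₂`. -/
def seq6 : Fin 6 → ((Fin 2 × Fin 2) × (Fin 2 × Fin 2) → ℂ) :=
  ![tp4 (par 0) (par 1), tp4 (par 0) (par 2), tp4 (par 1) (par 0),
    tp4 (par 1) (par 2), tp4 (par 2) (par 0), tp4 (par 2) (par 1)]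

/-!
Each of the three triples is, after a permutation of the qubits, the three-qubit triple
`|00+⟩, |0+0⟩, |+00⟩` tensored with one spectator qubit. That triple is antidistinguished by the
orthonormal basis formed by the columns of the Householder reflection in
`|000⟩ + |001⟩ + |010⟩ + |100⟩`, and a measurement on three qubits extends to four by
tensoring with the identity. Averaging the three measurements antidistinguishes all six states.
The Caves–Fuchs–Schack conditions hold because the squared overlaps are products of `1` and `1/2`.
-/

open scoped Kronecker

section ExpVal

variable {ι κ : Type*} [Fintype ι] [Fintype κ]

lemma ip_eq_star_dotProduct (v w : ι → ℂ) : ip v w = star v ⬝ᵥ w := rfl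

lemma star_ip (v w : ι → ℂ) : star (ip v w) = ip w v := by
  simp [ip, mul_comm]

lemma ip_prod (a c : ι → ℂ) (b d : κ → ℂ) :
    ip (fun p : ι × κ => a p.1 * b p.2) (fun p => c p.1 * d p.2) = ip a c * ip b d := by
  simp only [ip, Fintype.sum_prod_type, Finset.sum_mul_sum, star_mul']
  exact Finset.sum_congr rfl fun i _ => Finset.sum_congr rfl fun k _ => by ring

lemma expVal_sum {α : Type*} (s : Finset α) (M : α → Matrix ι ι ℂ) (v : ι → ℂ) :
    expVal (∑ a ∈ s, M a) v = ∑ a ∈ s, expVal (M a) v := by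
  simp only [expVal, Matrix.sum_mulVec, dotProduct_sum]

lemma expVal_smul (c : ℂ) (M : Matrix ι ι ℂ) (v : ι → ℂ) :
    expVal (c • M) v = c * expVal M v := by
  simp only [expVal, Matrix.smul_mulVec, dotProduct_smul, smul_eq_mul]

lemma expVal_outer (u v : ι → ℂ) : expVal (outer u) v = (normSq (ip u v) : ℂ) := by
  rw [Complex.normSq_eq_conj_mul_self]
  simp only [expVal, outer, ip, Matrix.vecMulVec_apply, Matrix.mulVec, dotProduct, map_sum,
    map_mul, Finset.sum_mul, Finset.mul_sum, Pi.star_apply, Complex.star_def,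
    Complex.conj_conj]
  rw [Finset.sum_comm]
  refine Finset.sum_congr rfl fun i _ => Finset.sum_congr rfl fun j _ => by ring

lemma dotProduct_prod (a c : ι → ℂ) (b d : κ → ℂ) :
    (fun p : ι × κ => a p.1 * b p.2) ⬝ᵥ (fun p => c p.1 * d p.2) = (a ⬝ᵥ c) * (b ⬝ᵥ d) := by
  simp only [dotProduct, Fintype.sum_prod_type, Finset.sum_mul_sum]
  exact Finset.sum_congr rfl fun i _ => Finset.sum_congr rfl fun k _ => by ring

lemma kronecker_mulVec_prod (A : Matrix ι ι ℂ) (B : Matrix κ κ ℂ) (v : ι → ℂ) (w : κ → ℂ) :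
    (A ⊗ₖ B) *ᵥ (fun p => v p.1 * w p.2) = fun p => (A *ᵥ v) p.1 * (B *ᵥ w) p.2 := by
  ext p
  simp only [Matrix.mulVec, Matrix.kroneckerMap_apply]
  exact dotProduct_prod _ _ _ _

lemma expVal_kronecker (A : Matrix ι ι ℂ) (B : Matrix κ κ ℂ) (v : ι → ℂ) (w : κ → ℂ) :
    expVal (A ⊗ₖ B) (fun p => v p.1 * w p.2) = expVal A v * expVal B w := by
  simp only [expVal, kronecker_mulVec_prod, ← dotProduct_prod]
  congr 1
  ext p
  exact star_mul' _ _

lemma expVal_submatrix_equiv (A : Matrix ι ι ℂ) (e : κ ≃ ι) (v : ι → ℂ) :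
    expVal (A.submatrix e e) (v ∘ e) = expVal A v := by
  simp only [expVal, dotProduct, Matrix.mulVec, Matrix.submatrix_apply, Function.comp_apply,
    Pi.star_apply]
  rw [e.sum_comp fun i => star (v i) * ∑ j, A i (e j) * v (e j)]
  simp only [e.sum_comp fun j => _ * v j]

lemma re_expVal_nonneg {M : Matrix ι ι ℂ} (hM : M.PosSemidef) (v : ι → ℂ) :
    0 ≤ (expVal M v).re :=
  (Complex.nonneg_iff.mp (hM.dotProduct_mulVec_nonneg v)).1

lemma re_sum_expVal_pos_iff {n : ℕ} {M : Matrix ι ι ℂ} (hM : M.PosSemidef)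
    (φ : Fin n → ι → ℂ) : 0 < (∑ i, expVal M (φ i)).re ↔ ∃ i, 0 < (expVal M (φ i)).re := by
  rw [Complex.re_sum, Finset.sum_pos_iff_of_nonneg fun i _ => re_expVal_nonneg hM _]
  simp

end ExpVal

section Householder

variable {ι κ : Type*} [Fintype ι] [Fintype κ]

lemma sum_outer_col (U : Matrix ι κ ℂ) : ∑ k, outer (fun i => U i k) = U * Uᴴ := by
  ext i j
  simp [outer, Matrix.sum_apply, Matrix.mul_apply, Matrix.vecMulVec_apply]

variable [DecidableEq ι]

def householder (w : ι → ℂ) : Matrix ι ι ℂ := 1 - (2 / ip w w) • outer w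

lemma householder_conjTranspose (w : ι → ℂ) : (householder w)ᴴ = householder w := by
  simp [householder, outer, Matrix.conjTranspose_sub, Matrix.conjTranspose_smul, star_div₀, star_ip]

lemma householder_mul_self {w : ι → ℂ} (hw : w ≠ 0) : householder w * householder w = 1 := by
  have hww : ip w w ≠ 0 := mt dotProduct_star_self_eq_zero.1 hw
  simp only [householder, outer, sub_mul, mul_sub, Matrix.smul_mul, Matrix.mul_smul,
    Matrix.vecMulVec_mul_vecMulVec, one_mul, mul_one, Matrix.vecMulVec_smul, smul_smul,
    ← ip_eq_star_dotProduct]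
  rw [show 2 / ip w w * (2 / ip w w * ip w w) = 2 * (2 / ip w w) by field_simp, two_mul,
    add_smul]
  abel

lemma householder_mulVec (w v : ι → ℂ) :
    householder w *ᵥ v = v - (2 / ip w w * ip w v) • w := by
  simp [householder, outer, Matrix.sub_mulVec, Matrix.smul_mulVec, Matrix.vecMulVec_mulVec,
    smul_smul, ip_eq_star_dotProduct]

lemma ip_householder_col (w v : ι → ℂ) (x : ι) :
    ip (fun i => householder w i x) v = v x - 2 / ip w w * ip w v * w x := by
  have h := congrFun (householder_mulVec w v) x
  rw [← householder_conjTranspose, Matrix.mulVec, Pi.sub_apply, Pi.smul_apply, smul_eq_mul] at h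
  exact h

end Householder

namespace PureAntidist

variable {ι κ : Type*} [Fintype ι] [Fintype κ] [DecidableEq ι] {n : ℕ}

theorem of_frame {φ : Fin n → ι → ℂ} (u : κ → ι → ℂ) (hu : ∑ k, outer (u k) = 1)
    (f : κ → Fin n) (horth : ∀ k, ip (u k) (φ (f k)) = 0)
    (hdetect : ∀ j, ∃ k i, f k = j ∧ ip (u k) (φ i) ≠ 0) : PureAntidist φ := by
  set P : Fin n → Matrix ι ι ℂ := fun j => ∑ k ∈ Finset.univ.filter (f · = j), outer (u k)
  have hP : ∀ j, (P j).PosSemidef := fun j =>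
    posSemidef_sum _ fun k _ => posSemidef_vecMulVec_self_star (u k)
  refine ⟨P, hP, by rw [Finset.sum_fiberwise]; exact hu, fun j => ?_, fun j => ?_⟩
  · refine (expVal_sum _ _ _).trans <| Finset.sum_eq_zero fun k hk => ?_
    rw [← (Finset.mem_filter.1 hk).2, expVal_outer, horth, map_zero, Complex.ofReal_zero]
  · obtain ⟨k, i, rfl, hki⟩ := hdetect j
    refine (re_sum_expVal_pos_iff (hP _) φ).2 ⟨i, ?_⟩
    simp only [P, expVal_sum, expVal_outer, Complex.re_sum, Complex.ofReal_re]
    exact Finset.sum_pos' (fun _ _ => Complex.normSq_nonneg _)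
      ⟨k, by simp, Complex.normSq_pos.2 hki⟩

theorem tensor [DecidableEq κ] {φ : Fin n → ι → ℂ} (hφ : PureAntidist φ) (χ : Fin n → κ → ℂ)
    (hχ : ∀ j, χ j ≠ 0) : PureAntidist fun j (p : ι × κ) => φ j p.1 * χ j p.2 := by
  obtain ⟨P, hpsd, hsum, hzero, hpos⟩ := hφ
  have hnorm : ∀ j, 0 < expVal 1 (χ j) := fun j => by
    simpa [expVal] using hχ j
  refine ⟨fun j => P j ⊗ₖ 1, fun j => (hpsd j).kronecker .one, ?_, fun j => ?_, fun j => ?_⟩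
  · rw [← Matrix.one_kronecker_one, ← hsum]
    ext p q
    simp only [Matrix.sum_apply, Matrix.kroneckerMap_apply, Finset.sum_mul]
  · rw [expVal_kronecker, hzero, zero_mul]
  · obtain ⟨i, hi⟩ := (re_sum_expVal_pos_iff (hpsd j) φ).1 (hpos j)
    refine (re_sum_expVal_pos_iff ((hpsd j).kronecker .one) _).2 ⟨i, ?_⟩
    obtain ⟨hre, him⟩ := Complex.lt_def.1 (hnorm i)
    rw [Complex.zero_re] at hre
    rw [expVal_kronecker, Complex.mul_re, ← him, Complex.zero_im, mul_zero, sub_zero]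
    exact mul_pos hi hre

theorem comp_equiv [DecidableEq κ] {φ : Fin n → ι → ℂ} (hφ : PureAntidist φ) (e : κ ≃ ι) :
    PureAntidist fun j => φ j ∘ e := by
  obtain ⟨P, hpsd, hsum, hzero, hpos⟩ := hφ
  refine ⟨fun j => (P j).submatrix e e, fun j => (hpsd j).submatrix e, ?_, fun j => ?_,
    fun j => ?_⟩
  · rw [← Matrix.submatrix_one_equiv e, ← hsum]
    ext a b
    simp only [Matrix.sum_apply, Matrix.submatrix_apply]
  · rw [expVal_submatrix_equiv, hzero]
  · simpa only [expVal_submatrix_equiv] using hpos j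

/-- The union theorem, proved by averaging the measurements of the subfamilies. -/
theorem of_cover {S : Type*} [Fintype S] [Nonempty S] {m : ℕ} {φ : Fin n → ι → ℂ}
    (σ : S → Fin m → Fin n) (h : ∀ s, PureAntidist (φ ∘ σ s))
    (hcover : ∀ j, ∃ s a, σ s a = j) : PureAntidist φ := by
  choose P hpsd hsum hzero hpos using h
  set c : ℝ := (Fintype.card S : ℝ)⁻¹
  set Q : Fin n → Matrix ι ι ℂ := fun j =>
    (c : ℂ) • ∑ s, ∑ a ∈ Finset.univ.filter (σ s · = j), P s a
  have hQ : ∀ j, (Q j).PosSemidef := fun j =>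
    (posSemidef_sum _ fun s _ => posSemidef_sum _ fun a _ => hpsd s a).smul
      (Complex.zero_le_real.2 (by positivity))
  have hsumre : ∀ j i, (expVal (Q j) (φ i)).re =
      c * ∑ s, ∑ a ∈ Finset.univ.filter (σ s · = j), (expVal (P s a) (φ i)).re := by
    intro j i
    simp only [Q, expVal_smul, expVal_sum, Complex.re_ofReal_mul, Complex.re_sum]
  refine ⟨Q, hQ, ?_, fun j => ?_, fun j => ?_⟩
  · simp only [Q, ← Finset.smul_sum]
    rw [Finset.sum_comm]
    simp only [Finset.sum_fiberwise, hsum, Finset.sum_const, Finset.card_univ]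
    rw [← Nat.cast_smul_eq_nsmul ℂ, smul_smul, ← Complex.ofReal_natCast, ← Complex.ofReal_mul,
      inv_mul_cancel₀ (by positivity), Complex.ofReal_one, one_smul]
  · simp only [Q, expVal_smul, expVal_sum]
    refine mul_eq_zero_of_right _ <| Finset.sum_eq_zero fun s _ =>
      Finset.sum_eq_zero fun a ha => ?_
    rw [← (Finset.mem_filter.1 ha).2]
    exact hzero s a
  · obtain ⟨s, a, rfl⟩ := hcover j
    obtain ⟨b, hb⟩ := (re_sum_expVal_pos_iff (hpsd s a) _).1 (hpos s a)
    refine (re_sum_expVal_pos_iff (hQ _) φ).2 ⟨σ s b, ?_⟩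
    rw [hsumre]
    refine mul_pos (by positivity) <| Finset.sum_pos'
      (fun t _ => Finset.sum_nonneg fun a' _ => re_expVal_nonneg (hpsd t a') _)
      ⟨s, Finset.mem_univ _, Finset.sum_pos'
        (fun a' _ => re_expVal_nonneg (hpsd s a') _) ⟨a, by simp, hb⟩⟩

end PureAntidist

lemma sq_ofReal_sqrt_two : ((√2 : ℝ) : ℂ) ^ 2 = 2 := by
  rw [← Complex.ofReal_pow, Real.sq_sqrt zero_le_two, Complex.ofReal_ofNat]

lemma qp_apply (i : Fin 2) : qp i = ((√2 : ℝ) : ℂ) / 2 := by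
  have h : ((√2 : ℝ) : ℂ) ≠ 0 := by simp
  fin_cases i <;>
  · simp only [qp, Fin.zero_eta, Fin.mk_one, Matrix.cons_val_zero, Matrix.cons_val_one]
    rw [Complex.ofReal_div, Complex.ofReal_one, div_eq_div_iff h two_ne_zero, one_mul, ← sq,
      sq_ofReal_sqrt_two]

lemma q0_ne_zero : q0 ≠ 0 := fun h => by simpa [q0] using congrFun h 0

lemma qp_ne_zero : qp ≠ 0 := fun h => by simpa [qp_apply] using congrFun h 0

lemma ip_tp (a b c d : Fin 2 → ℂ) : ip (tp a b) (tp c d) = ip a c * ip b d := ip_prod a c b d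

lemma ip_tp4 (a b c d : Fin 2 × Fin 2 → ℂ) : ip (tp4 a b) (tp4 c d) = ip a c * ip b d :=
  ip_prod a c b d

lemma ip_q0_q0 : ip q0 q0 = 1 := by simp [ip, q0]

lemma ip_q0_qp : ip q0 qp = ((√2)⁻¹ : ℝ) := by simp [ip, q0, qp]

lemma ip_qp_q0 : ip qp q0 = ((√2)⁻¹ : ℝ) := by simp [ip, q0, qp]

lemma cfs_triples :
    CFS (seq6 0) (seq6 1) (seq6 2) ∧ CFS (seq6 0) (seq6 3) (seq6 4) ∧
      CFS (seq6 1) (seq6 2) (seq6 5) := by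
  refine ⟨?_, ?_, ?_⟩ <;>
  · simp [CFS, seq6, par, ip_tp4, ip_tp, ip_q0_q0, ip_q0_qp, ip_qp_q0]
    norm_num

def tp3 (a b c : Fin 2 → ℂ) : Fin 2 × Fin 2 × Fin 2 → ℂ := fun x => a x.1 * b x.2.1 * c x.2.2

def plusTriple : Fin 3 → Fin 2 × Fin 2 × Fin 2 → ℂ :=
  ![tp3 q0 q0 qp, tp3 q0 qp q0, tp3 qp q0 q0]

def lowWeight : Fin 2 × Fin 2 × Fin 2 → ℂ :=
  fun x => if (x.1 : ℕ) + x.2.1 + x.2.2 ≤ 1 then 1 else 0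

lemma ip_lowWeight_self : ip lowWeight lowWeight = 4 := by
  simp [ip, lowWeight, Fintype.sum_prod_type]
  norm_num

lemma ip_lowWeight_plusTriple (j : Fin 3) : ip lowWeight (plusTriple j) = ((√2 : ℝ) : ℂ) := by
  fin_cases j <;> simp [ip, lowWeight, plusTriple, tp3, q0, qp_apply, Fintype.sum_prod_type]

lemma lowWeight_ne_zero : lowWeight ≠ 0 := fun h => by
  simpa [lowWeight] using congrFun h (0, 0, 0)

def excluded (x : Fin 2 × Fin 2 × Fin 2) : Fin 3 :=
  if x = (0, 1, 0) then 1 else if x = (1, 0, 0) then 2 else 0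

lemma ip_householder_col_plusTriple (x : Fin 2 × Fin 2 × Fin 2) (j : Fin 3) :
    ip (fun i => householder lowWeight i x) (plusTriple j) =
      plusTriple j x - ((√2 : ℝ) : ℂ) / 2 * lowWeight x := by
  rw [ip_householder_col, ip_lowWeight_self, ip_lowWeight_plusTriple]
  ring

/-- The reflection sends `plusTriple j` to `-(|x⟩ + |y⟩)/√2`, where `x`, `y` are the two strings
of weight one at which `plusTriple j` vanishes; so its column at `x` is orthogonal to
`plusTriple (excluded x)`. -/
theorem pureAntidist_plusTriple : PureAntidist plusTriple := by
  refine PureAntidist.of_frame (fun x i => householder lowWeight i x) ?_ excluded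
    (fun x => ?_) (fun j => ?_)
  · rw [sum_outer_col, householder_conjTranspose, householder_mul_self lowWeight_ne_zero]
  · rw [ip_householder_col_plusTriple]
    fin_cases x <;> simp [excluded, plusTriple, tp3, q0, qp_apply, lowWeight]
  · simp_rw [ip_householder_col_plusTriple]
    fin_cases j
    · exact ⟨(0, 0, 1), 1, rfl, by simp [plusTriple, tp3, q0, lowWeight]⟩
    · exact ⟨(0, 1, 0), 0, rfl, by simp [plusTriple, tp3, q0, lowWeight]⟩
    · exact ⟨(1, 0, 0), 0, rfl, by simp [plusTriple, tp3, q0, lowWeight]⟩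

lemma pureAntidist_of_plusTriple_mul {κ : Type*} [Fintype κ] [DecidableEq κ]
    {φ : Fin 3 → κ → ℂ} (e : κ ≃ (Fin 2 × Fin 2 × Fin 2) × Fin 2) (χ : Fin 3 → Fin 2 → ℂ)
    (hχ : ∀ j, χ j ≠ 0) (hφ : ∀ j p, φ j p = plusTriple j (e p).1 * χ j (e p).2) :
    PureAntidist φ := by
  convert (pureAntidist_plusTriple.tensor χ hχ).comp_equiv e using 1
  funext j p
  exact hφ j p

def splitQubit1 : (Fin 2 × Fin 2) × (Fin 2 × Fin 2) ≃ (Fin 2 × Fin 2 × Fin 2) × Fin 2 where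
  toFun p := ((p.1.2, p.2.1, p.2.2), p.1.1)
  invFun q := ((q.2, q.1.1), (q.1.2.1, q.1.2.2))
  left_inv _ := rfl
  right_inv _ := rfl

def splitQubit2 : (Fin 2 × Fin 2) × (Fin 2 × Fin 2) ≃ (Fin 2 × Fin 2 × Fin 2) × Fin 2 where
  toFun p := ((p.1.1, p.2.1, p.2.2), p.1.2)
  invFun q := ((q.1.1, q.2), (q.1.2.1, q.1.2.2))
  left_inv _ := rfl
  right_inv _ := rfl

def splitQubit4 : (Fin 2 × Fin 2) × (Fin 2 × Fin 2) ≃ (Fin 2 × Fin 2 × Fin 2) × Fin 2 where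
  toFun p := ((p.1.1, p.1.2, p.2.1), p.2.2)
  invFun q := ((q.1.1, q.1.2.1), (q.1.2.2, q.2))
  left_inv _ := rfl
  right_inv _ := rfl

lemma pureAntidist_S1 : PureAntidist (seq6 ∘ ![0, 1, 2]) := by
  refine pureAntidist_of_plusTriple_mul splitQubit1 ![q0, q0, q0] ?_ fun j p => ?_
  · intro j; fin_cases j <;> exact q0_ne_zero
  · fin_cases j <;> simp [seq6, par, tp4, tp, plusTriple, tp3, splitQubit1] <;> ring

lemma pureAntidist_S2 : PureAntidist (seq6 ∘ ![0, 3, 4]) := by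
  refine pureAntidist_of_plusTriple_mul splitQubit2 ![q0, qp, q0] ?_ fun j p => ?_
  · intro j; fin_cases j <;> simp [q0_ne_zero, qp_ne_zero]
  · fin_cases j <;> simp [seq6, par, tp4, tp, plusTriple, tp3, splitQubit2] <;> ring

lemma pureAntidist_S3 : PureAntidist (seq6 ∘ ![1, 2, 5]) := by
  refine pureAntidist_of_plusTriple_mul splitQubit4 ![q0, q0, qp] ?_ fun j p => ?_
  · intro j; fin_cases j <;> simp [q0_ne_zero, qp_ne_zero]
  · fin_cases j <;> simp [seq6, par, tp4, tp, plusTriple, tp3, splitQubit4] <;> ring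

/-- Each of `S₁ = {ψ₁₂, ψ₁₃, ψ₂₁}`, `S₂ = {ψ₁₂, ψ₂₃, ψ₃₁}`, `S₃ = {ψ₁₃, ψ₂₁, ψ₃₂}`
satisfies the Caves–Fuchs–Schack conditions, their union is the full set of six sequence
states, and hence the six sequence states are globally antidistinguishable. -/
theorem seq6_globally_antidistinguishable :
    CFS (seq6 0) (seq6 1) (seq6 2) ∧
    CFS (seq6 0) (seq6 3) (seq6 4) ∧
    CFS (seq6 1) (seq6 2) (seq6 5) ∧
    ({seq6 0, seq6 1, seq6 2} ∪ {seq6 0, seq6 3, seq6 4} ∪ {seq6 1, seq6 2, seq6 5} :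
        Set ((Fin 2 × Fin 2) × (Fin 2 × Fin 2) → ℂ)) =
      {seq6 0, seq6 1, seq6 2, seq6 3, seq6 4, seq6 5} ∧
    PureAntidist seq6 := by
  obtain ⟨h₁, h₂, h₃⟩ := cfs_triples
  refine ⟨h₁, h₂, h₃, ?_, ?_⟩
  · ext x
    simp only [Set.mem_union, Set.mem_insert_iff, Set.mem_singleton_iff]
    tauto
  · refine PureAntidist.of_cover ![![0, 1, 2], ![0, 3, 4], ![1, 2, 5]] (fun s => ?_) (by decide)
    fin_cases s
    exacts [pureAntidist_S1, pureAntidist_S2, pureAntidist_S3]
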